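/- Let u : [0, T+S] × ℝ → ℝ be C^{1,2} with bounded derivatives, let W be a standard Brownian motion, Y_t = u(t, W_t), Z_t = ∂_x u(t, W_t). Then for 0 ≤ t_n < t_{n+1}, E[Y_{t_{n+1}}·(W_{t_{n+1}} - W_{t_n}) | F_{t_n}] = (t_{n+1} - t_n)·E[Z_{t_{n+1}} | F_{t_n}], almost surely. -/

import Mathlib

/-!
Conditionally on `F tn`, the value `W tn` is frozen while the increment `G = W tn1 - W tn` is an
independent `N(0, tn1 - tn)` variable, so both conditional expectations are Gaussian integrals in
`G` evaluated at `x = W tn`. Stein's identity `E[f (x + G) G] = Var G * E[f' (x + G)]`, i.e.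
integration by parts against the Gaussian density `p` with `p' y = -(y / Var G) p y`, relates them.
-/

open MeasureTheory ProbabilityTheory Filter
open scoped NNReal

/-- A process `W` is a standard one-dimensional Brownian motion with respect to the
filtration `F`: it starts at `0`, is adapted, has increments independent of the past,
and its increments are centered Gaussian with variance `t - s`. -/
def IsBrownian {Ω : Type} {m0 : MeasurableSpace Ω} (μ : Measure Ω)
    (F : Filtration ℝ m0) (W : ℝ → Ω → ℝ) : Prop :=
  (∀ᵐ ω ∂μ, W 0 ω = 0) ∧
  Adapted F W ∧
  (∀ s t : ℝ, 0 ≤ s → s ≤ t →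
    Indep (MeasurableSpace.comap (fun ω => W t ω - W s ω) (borel ℝ)) (F s) μ) ∧
  (∀ s t : ℝ, 0 ≤ s → s ≤ t →
    Measure.map (fun ω => W t ω - W s ω) μ = gaussianReal 0 (Real.toNNReal (t - s)))

theorem condExp_comp_prod_ae_eq_integral_map_of_indep {Ω β Ω' E : Type*}
    {m m0 : MeasurableSpace Ω} {mβ : MeasurableSpace β}
    [MeasurableSpace Ω'] [StandardBorelSpace Ω'] [Nonempty Ω']
    [NormedAddCommGroup E] [NormedSpace ℝ E] [CompleteSpace E]
    {μ : Measure Ω} [IsFiniteMeasure μ] (hm : m ≤ m0) {X : Ω → β} {Y : Ω → Ω'}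
    (hX : Measurable[m] X) (hY : Measurable Y)
    (hindep : Indep (MeasurableSpace.comap Y inferInstance) m μ)
    {f : β × Ω' → E} (hf : StronglyMeasurable f)
    (hf_int : Integrable (fun ω => f (X ω, Y ω)) μ) :
    μ[fun ω => f (X ω, Y ω) | m] =ᵐ[μ] fun ω => ∫ y, f (X ω, y) ∂(μ.map Y) := by
  -- Conditioning on `m` is conditioning on the identity `(Ω, m0) → (Ω, m)`, and by independence
  -- the conditional distribution of `Y` given it is the law of `Y`.
  have hid : Measurable[m0, m] id := measurable_id'' hm
  have hid_ae : @AEMeasurable Ω Ω m m0 id μ := @Measurable.aemeasurable Ω Ω m0 m id μ hid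
  have hcond := condExp_prod_ae_eq_integral_condDistrib (mβ := m) (f := fun p => f (X p.1, p.2))
    hid hY.aemeasurable (hf.comp_measurable (hX.prodMap measurable_id)) hf_int
  rw [MeasurableSpace.comap_id] at hcond
  have hindepFun : @IndepFun Ω Ω Ω' m0 m _ id Y μ :=
    (IndepFun_iff_Indep (mβ := m) id Y μ).mpr <| by
      rw [MeasurableSpace.comap_id]; exact hindep.symm
  have hdistrib := (condDistrib_ae_eq_iff_measure_eq_compProd (μ := μ) (mβ := m) id
    hY.aemeasurable (@Kernel.const Ω Ω' m _ (μ.map Y))).mpr <| by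
      simpa using (indepFun_iff_map_prod_eq_prod_map_map (mβ := m) hid_ae
        hY.aemeasurable).mp hindepFun
  filter_upwards [hcond, ae_of_ae_map hid_ae hdistrib] with ω hω hω'
  simp only [id] at hω hω'
  rw [hω, hω', Kernel.const_apply]

lemma hasDerivAt_gaussianPDFReal (μ : ℝ) (v : ℝ≥0) (x : ℝ) :
    HasDerivAt (gaussianPDFReal μ v) (-((x - μ) / v) * gaussianPDFReal μ v x) x := by
  have hexponent : HasDerivAt (fun y => -(y - μ) ^ 2 / (2 * (v : ℝ)))
      (-(2 * (x - μ)) / (2 * v)) x := by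
    simpa using (((hasDerivAt_id x).sub_const μ).pow 2).neg.div_const (2 * (v : ℝ))
  rw [gaussianPDFReal_def]
  refine (hexponent.exp.const_mul _).congr_deriv ?_
  ring

lemma integrable_gaussianReal_iff {μ : ℝ} {v : ℝ≥0} (hv : v ≠ 0) {f : ℝ → ℝ} :
    Integrable f (gaussianReal μ v) ↔ Integrable (fun x => gaussianPDFReal μ v x * f x) := by
  rw [gaussianReal_of_var_ne_zero μ hv, integrable_withDensity_iff_integrable_smul'
    (measurable_gaussianPDF μ v) (ae_of_all _ fun _ => gaussianPDF_lt_top)]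
  simp [toReal_gaussianPDF]

/-- Stein's lemma. -/
theorem integral_mul_sub_gaussianReal {μ : ℝ} {v : ℝ≥0} {f f' : ℝ → ℝ}
    (hf : ∀ x, HasDerivAt f (f' x) x) (hf_int : Integrable f (gaussianReal μ v))
    (hf_mul_int : Integrable (fun x => f x * (x - μ)) (gaussianReal μ v))
    (hf'_int : Integrable f' (gaussianReal μ v)) :
    ∫ x, f x * (x - μ) ∂gaussianReal μ v = v * ∫ x, f' x ∂gaussianReal μ v := by
  rcases eq_or_ne v 0 with rfl | hv
  · simp
  have hv0 : (v : ℝ) ≠ 0 := by exact_mod_cast hv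
  simp only [integral_gaussianReal_eq_integral_smul hv, smul_eq_mul]
  rw [integrable_gaussianReal_iff hv] at hf_int hf_mul_int hf'_int
  set p := gaussianPDFReal μ v
  have hfp' : (fun x => f x * (-((x - μ) / v) * p x))
      = fun x => -(v : ℝ)⁻¹ * (p x * (f x * (x - μ))) := by
    ext x; ring
  have hibp := integral_mul_deriv_eq_deriv_mul_of_integrable (u := f) (v := p)
    (fun x _ => hf x) (fun x _ => hasDerivAt_gaussianPDFReal μ v x)
    (by rw [Pi.mul_def, hfp']; exact hf_mul_int.const_mul _)
    (by simpa only [Pi.mul_def, mul_comm] using hf'_int)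
    (by simpa only [Pi.mul_def, mul_comm] using hf_int)
  rw [hfp', integral_const_mul, neg_mul, neg_inj] at hibp
  simp only [mul_comm (f' _)] at hibp
  rw [← hibp, mul_inv_cancel_left₀ hv0]

theorem integral_mul_gaussianReal_of_bounded {v : ℝ≥0} {f : ℝ → ℝ} (hf : Differentiable ℝ f)
    {C C' : ℝ} (hfC : ∀ x, |f x| ≤ C) (hf'C : ∀ x, |deriv f x| ≤ C') :
    ∫ x, f x * x ∂gaussianReal 0 v = v * ∫ x, deriv f x ∂gaussianReal 0 v := by
  have hid_int : Integrable (fun x : ℝ => x) (gaussianReal 0 v) :=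
    (memLp_id_gaussianReal 1).integrable le_rfl
  simpa using integral_mul_sub_gaussianReal (μ := 0) (v := v) (fun x => (hf x).hasDerivAt)
    (.of_bound hf.continuous.aestronglyMeasurable C (ae_of_all _ hfC))
    (by simpa using hid_int.bdd_mul hf.continuous.aestronglyMeasurable (ae_of_all _ hfC))
    (.of_bound (measurable_deriv f).aestronglyMeasurable C' (ae_of_all _ hf'C))

theorem condExp_comp_add_mul_of_indep_gaussian {Ω : Type*} {m m0 : MeasurableSpace Ω}
    {μ : Measure Ω} [IsFiniteMeasure μ] (hm : m ≤ m0) {X G : Ω → ℝ} (hX : Measurable[m] X)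
    (hG : Measurable G) (hindep : Indep (MeasurableSpace.comap G (borel ℝ)) m μ) {v : ℝ≥0}
    (hG_law : μ.map G = gaussianReal 0 v) {f : ℝ → ℝ} (hf : Differentiable ℝ f)
    {C C' : ℝ} (hfC : ∀ x, |f x| ≤ C) (hf'C : ∀ x, |deriv f x| ≤ C') :
    μ[fun ω => f (X ω + G ω) * G ω | m]
      =ᵐ[μ] fun ω => v * μ[fun ω => deriv f (X ω + G ω) | m] ω := by
  have hXG : Measurable fun ω => X ω + G ω := (hX.mono hm le_rfl).add hG
  have hG_int : Integrable G μ :=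
    (hG_law ▸ (memLp_id_gaussianReal 1).integrable le_rfl : Integrable id (μ.map G))
      |>.comp_measurable hG
  have hfreeze := condExp_comp_prod_ae_eq_integral_map_of_indep hm hX hG hindep
    (f := fun p => f (p.1 + p.2) * p.2)
    ((hf.continuous.comp (continuous_fst.add continuous_snd)).mul
      continuous_snd).stronglyMeasurable
    (hG_int.bdd_mul (hf.continuous.measurable.comp hXG).aestronglyMeasurable
      (ae_of_all _ fun ω => hfC _))
  have hfreeze' := condExp_comp_prod_ae_eq_integral_map_of_indep hm hX hG hindep
    (f := fun p => deriv f (p.1 + p.2))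
    ((measurable_deriv f).comp (measurable_fst.add measurable_snd)).stronglyMeasurable
    (.of_bound ((measurable_deriv f).comp hXG).aestronglyMeasurable C'
      (ae_of_all _ fun ω => hf'C _))
  filter_upwards [hfreeze, hfreeze'] with ω h h'
  rw [h, h', hG_law]
  simpa only [deriv_comp_const_add] using integral_mul_gaussianReal_of_bounded
    (f := fun y => f (X ω + y)) (hf.comp (differentiable_id.const_add (X ω))) (fun y => hfC _)
    (fun y => by simpa only [deriv_comp_const_add] using hf'C _)

theorem condexp_mul_increment_eq_general {Ω : Type} {m0 : MeasurableSpace Ω}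
    (μ : Measure Ω) [IsProbabilityMeasure μ] (F : Filtration ℝ m0) (W : ℝ → Ω → ℝ)
    (hW : IsBrownian μ F W) (T S : ℝ)
    (u : ℝ → ℝ → ℝ)
    (hu : ∀ t ∈ Set.Icc 0 (T + S), ContDiff ℝ 2 (u t))
    (C₀ : ℝ)
    (hbd : ∀ t ∈ Set.Icc 0 (T + S), ∀ x : ℝ,
      |u t x| ≤ C₀ ∧ |deriv (u t) x| ≤ C₀ ∧ |deriv (deriv (u t)) x| ≤ C₀)
    (tn tn1 : ℝ) (h0 : 0 ≤ tn) (h : tn < tn1) (h1 : tn1 ≤ T + S) :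
    (condExp (F tn) μ
        (fun ω => u tn1 (W tn1 ω) * (W tn1 ω - W tn ω)))
      =ᵐ[μ]
    (fun ω => (tn1 - tn) *
        condExp (F tn) μ (fun ω' => deriv (u tn1) (W tn1 ω')) ω) := by
  obtain ⟨-, hadapted, hindep, hlaw⟩ := hW
  have htn1 : tn1 ∈ Set.Icc 0 (T + S) := ⟨h0.trans h.le, h1⟩
  have hW_meas : ∀ t, Measurable (W t) := fun t => (hadapted t).mono (F.le t) le_rfl
  have key := condExp_comp_add_mul_of_indep_gaussian (F.le tn) (hadapted tn)
    ((hW_meas tn1).sub (hW_meas tn)) (hindep tn tn1 h0 h.le) (hlaw tn tn1 h0 h.le)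
    ((hu tn1 htn1).differentiable (by norm_num)) (fun x => (hbd tn1 htn1 x).1)
    (fun x => (hbd tn1 htn1 x).2.1)
  simpa [Real.coe_toNNReal _ (sub_nonneg.2 h.le)] using key

/-- Gaussian integration-by-parts identity:
`E[Y_{t_{n+1}} ΔW | F_{t_n}] = Δt E[Z_{t_{n+1}} | F_{t_n}]` where
`Y_t = u(t, W_t)` and `Z_t = ∂ₓu(t, W_t)`. -/
theorem condexp_mul_increment_eq {Ω : Type} {m0 : MeasurableSpace Ω}
    (μ : Measure Ω) [IsProbabilityMeasure μ] (F : Filtration ℝ m0) (W : ℝ → Ω → ℝ)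
    (hW : IsBrownian μ F W) (T S : ℝ) (hTS : 0 < T) (hS : 0 ≤ S)
    (u : ℝ → ℝ → ℝ)
    (hu : ∀ t ∈ Set.Icc 0 (T + S), ContDiff ℝ 2 (u t))
    (hucont : Continuous fun p : ℝ × ℝ => u p.1 p.2)
    (C₀ : ℝ)
    (hbd : ∀ t ∈ Set.Icc 0 (T + S), ∀ x : ℝ,
      |u t x| ≤ C₀ ∧ |deriv (u t) x| ≤ C₀ ∧ |deriv (deriv (u t)) x| ≤ C₀)
    (tn tn1 : ℝ) (h0 : 0 ≤ tn) (h : tn < tn1) (h1 : tn1 ≤ T + S) :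
    (condExp (F tn) μ
        (fun ω => u tn1 (W tn1 ω) * (W tn1 ω - W tn ω)))
      =ᵐ[μ]
    (fun ω => (tn1 - tn) *
        condExp (F tn) μ (fun ω' => deriv (u tn1) (W tn1 ω')) ω) :=
  condexp_mul_increment_eq_general μ F W hW T S u hu C₀ hbd tn tn1 h0 h h1
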